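/- arXiv:1012.5401 — 3 statements merged into one kernel-verified Lean document; each statement's English description precedes it below -/
import Mathlib

section
/- For every quadruple ε = (ε₁, ε₂, ε₃, ε₄) with each εᵢ ∈ {+1, −1} and every integer n, the automorphism Φ_{ε,n} of F satisfies Φ_{ε,n}(a₄) = w · a₄ · (a₃ · (w·a₄)^{ε₄})^{−n}, where w = (a₃⁻¹·a₁·a₂^{−ε₂})^{ε₃}. -/
/-! `F` is the free group on four generators `a₁, a₂, a₃, a₄`;
here `a 0 = a₁`, `a 1 = a₂`, `a 2 = a₃`, `a 3 = a₄`. -/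

abbrev F : Type := FreeGroup (Fin 4)

def a (i : Fin 4) : F := FreeGroup.of i

/-- `Δ i ε` is the endomorphism `Δ_{i+1}^ε` of `F` induced by the `ε`-th power of the
Dehn twist `D_{i+1}` (the index is shifted by one): `Δ 0 ε = Δ₁^ε`, …, `Δ 4 ε = Δ₅^ε`. -/
def Δ : Fin 5 → ℤ → (F →* F) := fun i ε =>
  FreeGroup.lift (![
    ![a 0, a 1 * a 0 ^ ε, a 2, a 3],
    ![a 0 * a 1 ^ (-ε), a 1, a 2, a 3],
    ![a 0, ((a 2)⁻¹ * a 0) ^ ε * a 1, a 2, ((a 2)⁻¹ * a 0) ^ ε * a 3],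
    ![a 0, a 1, a 2 * a 3 ^ ε, a 3],
    ![a 0, a 1, a 2, a 3 * a 2 ^ (-ε)]] i)

lemma Δ_inv_comp (i : Fin 5) (ε : ℤ) :
    (Δ i (-ε)).comp (Δ i ε) = MonoidHom.id F := by
  apply FreeGroup.ext_hom
  intro j
  fin_cases i <;> fin_cases j <;>
    simp [Δ, a, MonoidHom.comp_apply]

/-- `Δ i ε` as an automorphism of `F` (its inverse is `Δ i (-ε)`). -/
def Δaut (i : Fin 5) (ε : ℤ) : F ≃* F where
  toFun := Δ i ε
  invFun := Δ i (-ε)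
  left_inv := fun x => by
    simpa using congrArg (fun f : F →* F => f x) (Δ_inv_comp i ε)
  right_inv := fun x => by
    have h := congrArg (fun f : F →* F => f x) (Δ_inv_comp i (-ε))
    rw [neg_neg] at h
    simpa using h
  map_mul' := map_mul _

/-- The automorphism `Φ_{ε,n} = Δ₂^{ε₂} ∘ Δ₁^{ε₁} ∘ Δ₃^{ε₃} ∘ Δ₄^{ε₄} ∘ (Δ₅^{+1})^n` of `F`
(multiplication of automorphisms is composition). -/
def Φ (ε₁ ε₂ ε₃ ε₄ n : ℤ) : F ≃* F :=
  Δaut 1 ε₂ * Δaut 0 ε₁ * Δaut 2 ε₃ * Δaut 3 ε₄ * (Δaut 4 1) ^ n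

namespace MulAut

variable {G : Type*} [Group G]

theorem zpow_apply_eq_self_of_apply_eq_self {σ : MulAut G} {y : G} (hy : σ y = y) (n : ℤ) :
    (σ ^ n) y = y := by
  have h := Equiv.Perm.zpow_apply_eq_self_of_apply_eq_self (f := toPerm G σ) hy n
  rwa [← map_zpow] at h

theorem zpow_apply_eq_mul_zpow {σ : MulAut G} {x y : G} (hy : σ y = y) (hx : σ x = x * y)
    (n : ℤ) : (σ ^ n) x = x * y ^ n := by
  induction n using Int.induction_on with
  | zero => simp
  | succ k ih =>
    rw [zpow_add_one, mul_apply, hx, map_mul, ih, zpow_apply_eq_self_of_apply_eq_self hy,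
      zpow_add_one, mul_assoc]
  | pred k ih =>
    have hx' : σ⁻¹ x = x * y⁻¹ := by
      rw [inv_apply, MulEquiv.symm_apply_eq, map_mul, map_inv, hy, hx, mul_inv_cancel_right]
    rw [zpow_sub_one, mul_apply, hx', map_mul, map_inv, ih,
      zpow_apply_eq_self_of_apply_eq_self hy, zpow_sub_one, mul_assoc]

end MulAut

section Twists

variable (ε : ℤ)

@[simp] theorem Δaut_apply (i : Fin 5) (x : F) : Δaut i ε x = Δ i ε x := rfl

@[simp] theorem Δ_apply_a (i : Fin 5) (j : Fin 4) :
    Δ i ε (a j) = ![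
      ![a 0, a 1 * a 0 ^ ε, a 2, a 3],
      ![a 0 * a 1 ^ (-ε), a 1, a 2, a 3],
      ![a 0, ((a 2)⁻¹ * a 0) ^ ε * a 1, a 2, ((a 2)⁻¹ * a 0) ^ ε * a 3],
      ![a 0, a 1, a 2 * a 3 ^ ε, a 3],
      ![a 0, a 1, a 2, a 3 * a 2 ^ (-ε)]] i j :=
  FreeGroup.lift_apply_of

theorem Δaut_four_zpow_apply_a_three (n : ℤ) : (Δaut 4 1 ^ n) (a 3) = a 3 * (a 2) ^ (-n) := by
  rw [MulAut.zpow_apply_eq_mul_zpow (y := (a 2)⁻¹) (by simp) (by simp), inv_zpow']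

end Twists

theorem phi_apply_a4_general (ε₁ ε₂ ε₃ ε₄ : ℤ) (n : ℤ) :
    Φ ε₁ ε₂ ε₃ ε₄ n (a 3) =
      ((a 2)⁻¹ * a 0 * (a 1) ^ (-ε₂)) ^ ε₃ * a 3 *
        (a 2 * (((a 2)⁻¹ * a 0 * (a 1) ^ (-ε₂)) ^ ε₃ * a 3) ^ ε₄) ^ (-n) := by
  set w := ((a 2)⁻¹ * a 0 * (a 1) ^ (-ε₂)) ^ ε₃
  set v := ((a 2)⁻¹ * a 0) ^ ε₃
  calc Φ ε₁ ε₂ ε₃ ε₄ n (a 3)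
      = Δ 1 ε₂ (Δ 0 ε₁ (Δ 2 ε₃ (Δ 3 ε₄ (a 3 * (a 2) ^ (-n))))) := by
        simp [Φ, Δaut_four_zpow_apply_a_three]
    _ = Δ 1 ε₂ (Δ 0 ε₁ (Δ 2 ε₃ (a 3 * (a 2 * a 3 ^ ε₄) ^ (-n)))) := by simp
    _ = Δ 1 ε₂ (Δ 0 ε₁ (v * a 3 * (a 2 * (v * a 3) ^ ε₄) ^ (-n))) := by simp [v]
    -- `Δ₁` moves only `a₂`, which does not occur yet
    _ = Δ 1 ε₂ (v * a 3 * (a 2 * (v * a 3) ^ ε₄) ^ (-n)) := by simp [v]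
    _ = w * a 3 * (a 2 * (w * a 3) ^ ε₄) ^ (-n) := by simp [v, w, mul_assoc]

/-- `Φ_{ε,n}(a₄) = w · a₄ · (a₃ · (w·a₄)^{ε₄})^{−n}` where `w = (a₃⁻¹·a₁·a₂^{−ε₂})^{ε₃}`. -/
theorem phi_apply_a4 (ε₁ ε₂ ε₃ ε₄ : ℤ)
    (h₁ : ε₁ = 1 ∨ ε₁ = -1) (h₂ : ε₂ = 1 ∨ ε₂ = -1)
    (h₃ : ε₃ = 1 ∨ ε₃ = -1) (h₄ : ε₄ = 1 ∨ ε₄ = -1) (n : ℤ) :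
    Φ ε₁ ε₂ ε₃ ε₄ n (a 3) =
      ((a 2)⁻¹ * a 0 * (a 1) ^ (-ε₂)) ^ ε₃ * a 3 *
        (a 2 * (((a 2)⁻¹ * a 0 * (a 1) ^ (-ε₂)) ^ ε₃ * a 3) ^ ε₄) ^ (-n) :=
  phi_apply_a4_general ε₁ ε₂ ε₃ ε₄ n
end

section
/- For every quadruple ε = (ε₁, ε₂, ε₃, ε₄) with each εᵢ ∈ {+1, −1} and every integer n, the presented group G'_{ε,n} (the mapping-torus group of the free-group automorphism Φ_{ε,n}) is generated by the images of x₁ and t; that is, the subgroup closure of {x₁, t} in G'_{ε,n} is the whole group. In particular the fundamental group of the once-punctured genus-two surface bundle M'_{ε,n} has rank at most two. -/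
/-- `ρ` rewrites a word in `a₁,…,a₄` as the corresponding word in the first four
generators `x₁,…,x₄` of the free group on five generators `x₁, x₂, x₃, x₄, t`
(here `t` is the fifth generator `(4 : Fin 5)`). -/
def ρ : F →* FreeGroup (Fin 5) := FreeGroup.lift fun j => FreeGroup.of (Fin.castSucc j)

/-- The relators `t⁻¹·xᵢ·t·(ρ(Φ_{ε,n}(aᵢ)))⁻¹` for `i = 1, 2, 3, 4`. -/
def monodromyRels (ε₁ ε₂ ε₃ ε₄ n : ℤ) : Set (FreeGroup (Fin 5)) :=
  { w | ∃ i : Fin 4,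
      w = (FreeGroup.of 4)⁻¹ * FreeGroup.of (Fin.castSucc i) * FreeGroup.of 4 *
        (ρ (Φ ε₁ ε₂ ε₃ ε₄ n (a i)))⁻¹ }

/-- The surface relator `[x₁,x₂]·[x₃,x₄]⁻¹` on the generators `x₁,…,x₄`. -/
def surfaceRel : FreeGroup (Fin 5) :=
  (FreeGroup.of 0 * FreeGroup.of 1 * (FreeGroup.of 0)⁻¹ * (FreeGroup.of 1)⁻¹) *
    (FreeGroup.of 2 * FreeGroup.of 3 * (FreeGroup.of 2)⁻¹ * (FreeGroup.of 3)⁻¹)⁻¹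

/-- `G'_{ε,n}`, the mapping-torus group of `Φ_{ε,n}`, i.e. the fundamental group of the
once-punctured genus-two surface bundle `M'_{ε,n}`: generators `x₁, x₂, x₃, x₄, t` and
relators `t⁻¹·xᵢ·t·(ρ(Φ_{ε,n}(aᵢ)))⁻¹` for `i = 1,…,4`. -/
def G' (ε₁ ε₂ ε₃ ε₄ n : ℤ) : Type :=
  PresentedGroup (monodromyRels ε₁ ε₂ ε₃ ε₄ n)

instance (ε₁ ε₂ ε₃ ε₄ n : ℤ) : Group (G' ε₁ ε₂ ε₃ ε₄ n) :=
  inferInstanceAs (Group (PresentedGroup _))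

/-! The relators say that conjugation by `t` acts on the fibre subgroup `⟨x₁, x₂, x₃, x₄⟩` as `Φ`,
so `⟨x₁, t⟩` pulls back to a subgroup `K` of `F` with `a₁ ∈ K` and `Φ K ⊆ K`. Then
`Φ(a₁) = a₁a₂^{-ε₂}` puts `a₂` in `K`, `Φ(a₂) = (a₃⁻¹a₁a₂^{-ε₂})^{ε₃} a₂ (a₁a₂^{-ε₂})^{ε₁}` puts `a₃`
in `K`, and `Φ(a₃) = a₃((a₃⁻¹a₁a₂^{-ε₂})^{ε₃}a₄)^{ε₄}` puts `a₄` in `K`; at each step the exponent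
`±1` lets us pass from a power back to the element itself. -/

theorem Subgroup.zpow_mem_iff_of_eq_one_or_neg_one {G : Type*} [Group G] (H : Subgroup G)
    {y : G} {k : ℤ} (hk : k = 1 ∨ k = -1) : y ^ k ∈ H ↔ y ∈ H := by
  rcases hk with rfl | rfl <;> simp

theorem MulAut.zpow_apply_eq_self {M : Type*} [Monoid M] {e : MulAut M} {x : M}
    (h : e x = x) (n : ℤ) : (e ^ n) x = x :=
  (MulAction.stabilizer (MulAut M) x).zpow_mem (h : e • x = x) n

section

variable (ε₁ ε₂ ε₃ ε₄ n : ℤ)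

theorem Φ_apply_a_of_ne_three {i : Fin 4} (hi : i ≠ 3) :
    Φ ε₁ ε₂ ε₃ ε₄ n (a i) = (Δaut 1 ε₂ * Δaut 0 ε₁ * Δaut 2 ε₃ * Δaut 3 ε₄) (a i) := by
  rw [Φ, MulAut.mul_apply,
    MulAut.zpow_apply_eq_self (by fin_cases i <;> simp_all [Δaut, Δ, a]) n]

theorem Φ_apply_a_zero : Φ ε₁ ε₂ ε₃ ε₄ n (a 0) = a 0 * a 1 ^ (-ε₂) := by
  rw [Φ_apply_a_of_ne_three _ _ _ _ _ (by decide)]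
  simp [Δaut, Δ, a]

theorem Φ_apply_a_one :
    Φ ε₁ ε₂ ε₃ ε₄ n (a 1) =
      ((a 2)⁻¹ * (a 0 * a 1 ^ (-ε₂))) ^ ε₃ * a 1 * (a 0 * a 1 ^ (-ε₂)) ^ ε₁ := by
  rw [Φ_apply_a_of_ne_three _ _ _ _ _ (by decide)]
  simp [Δaut, Δ, a, mul_assoc]

theorem Φ_apply_a_two :
    Φ ε₁ ε₂ ε₃ ε₄ n (a 2) = a 2 * (((a 2)⁻¹ * (a 0 * a 1 ^ (-ε₂))) ^ ε₃ * a 3) ^ ε₄ := by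
  rw [Φ_apply_a_of_ne_three _ _ _ _ _ (by decide)]
  simp [Δaut, Δ, a]

end

theorem Subgroup.eq_top_of_a_zero_mem_of_Φ_mem {ε₁ ε₂ ε₃ ε₄ n : ℤ}
    (h₂ : ε₂ = 1 ∨ ε₂ = -1) (h₃ : ε₃ = 1 ∨ ε₃ = -1) (h₄ : ε₄ = 1 ∨ ε₄ = -1)
    (K : Subgroup F) (h0 : a 0 ∈ K) (hΦ : ∀ w ∈ K, Φ ε₁ ε₂ ε₃ ε₄ n w ∈ K) : K = ⊤ := by
  have h1 : a 1 ∈ K := by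
    have := hΦ _ h0
    rwa [Φ_apply_a_zero, K.mul_mem_cancel_left h0, zpow_neg, K.inv_mem_iff,
      K.zpow_mem_iff_of_eq_one_or_neg_one h₂] at this
  have hu : a 0 * a 1 ^ (-ε₂) ∈ K := K.mul_mem h0 (K.zpow_mem h1 _)
  have hv : (a 2)⁻¹ * (a 0 * a 1 ^ (-ε₂)) ∈ K := by
    have := hΦ _ h1
    rwa [Φ_apply_a_one, K.mul_mem_cancel_right (K.zpow_mem hu _),
      K.mul_mem_cancel_right h1, K.zpow_mem_iff_of_eq_one_or_neg_one h₃] at this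
  have h2 : a 2 ∈ K := by
    rwa [K.mul_mem_cancel_right hu, K.inv_mem_iff] at hv
  have h3 : a 3 ∈ K := by
    have := hΦ _ h2
    rwa [Φ_apply_a_two, K.mul_mem_cancel_left h2, K.zpow_mem_iff_of_eq_one_or_neg_one h₄,
      K.mul_mem_cancel_left (K.zpow_mem hv _)] at this
  rw [eq_top_iff, ← FreeGroup.closure_range_of, Subgroup.closure_le]
  rintro _ ⟨i, rfl⟩
  fin_cases i
  exacts [h0, h1, h2, h3]

section MappingTorus

variable {ε₁ ε₂ ε₃ ε₄ n : ℤ}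

def fiberHom (ε₁ ε₂ ε₃ ε₄ n : ℤ) : F →* PresentedGroup (monodromyRels ε₁ ε₂ ε₃ ε₄ n) :=
  (PresentedGroup.mk _).comp ρ

theorem fiberHom_a (i : Fin 4) :
    fiberHom ε₁ ε₂ ε₃ ε₄ n (a i) = PresentedGroup.of (Fin.castSucc i) := by
  rw [fiberHom, MonoidHom.comp_apply, a, ρ, FreeGroup.lift_apply_of]
  rfl

theorem fiberHom_Φ (w : F) :
    fiberHom ε₁ ε₂ ε₃ ε₄ n (Φ ε₁ ε₂ ε₃ ε₄ n w) =
      (PresentedGroup.of 4)⁻¹ * fiberHom ε₁ ε₂ ε₃ ε₄ n w * PresentedGroup.of 4 := by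
  suffices (fiberHom ε₁ ε₂ ε₃ ε₄ n).comp (Φ ε₁ ε₂ ε₃ ε₄ n).toMonoidHom =
      (MulAut.conj (PresentedGroup.of 4)⁻¹).toMonoidHom.comp (fiberHom ε₁ ε₂ ε₃ ε₄ n) by
    simpa using DFunLike.congr_fun this w
  refine FreeGroup.ext_hom _ _ fun i => ?_
  have hrel : PresentedGroup.mk (monodromyRels ε₁ ε₂ ε₃ ε₄ n)
      ((FreeGroup.of 4)⁻¹ * FreeGroup.of (Fin.castSucc i) * FreeGroup.of 4 *
        (ρ (Φ ε₁ ε₂ ε₃ ε₄ n (a i)))⁻¹) = 1 :=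
    (QuotientGroup.eq_one_iff _).2 (Subgroup.subset_normalClosure ⟨i, rfl⟩)
  rw [map_mul, map_inv, mul_inv_eq_one] at hrel
  simp only [MonoidHom.comp_apply, MulEquiv.coe_toMonoidHom, MulAut.conj_apply, inv_inv]
  exact hrel.symm

end MappingTorus

theorem G'_generated_by_two_general (ε₁ ε₂ ε₃ ε₄ : ℤ)
    (h₂ : ε₂ = 1 ∨ ε₂ = -1)
    (h₃ : ε₃ = 1 ∨ ε₃ = -1) (h₄ : ε₄ = 1 ∨ ε₄ = -1) (n : ℤ) :
    Subgroup.closure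
      ({PresentedGroup.of (rels := monodromyRels ε₁ ε₂ ε₃ ε₄ n) 0,
        PresentedGroup.of (rels := monodromyRels ε₁ ε₂ ε₃ ε₄ n) 4} :
          Set (G' ε₁ ε₂ ε₃ ε₄ n)) = ⊤ := by
  set H : Subgroup (PresentedGroup (monodromyRels ε₁ ε₂ ε₃ ε₄ n)) :=
    Subgroup.closure {PresentedGroup.of 0, PresentedGroup.of 4}
  change H = ⊤
  have hx₁ : PresentedGroup.of 0 ∈ H := Subgroup.subset_closure (.inl rfl)
  have ht : PresentedGroup.of 4 ∈ H := Subgroup.subset_closure (.inr rfl)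
  have hΦ : ∀ w ∈ H.comap (fiberHom ε₁ ε₂ ε₃ ε₄ n),
      Φ ε₁ ε₂ ε₃ ε₄ n w ∈ H.comap (fiberHom ε₁ ε₂ ε₃ ε₄ n) := by
    intro w hw
    rw [Subgroup.mem_comap, fiberHom_Φ]
    exact H.mul_mem (H.mul_mem (H.inv_mem ht) hw) ht
  have hfiber : H.comap (fiberHom ε₁ ε₂ ε₃ ε₄ n) = ⊤ :=
    Subgroup.eq_top_of_a_zero_mem_of_Φ_mem h₂ h₃ h₄ _ (by simpa [fiberHom_a] using hx₁) hΦ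
  rw [eq_top_iff, ← PresentedGroup.closure_range_of, Subgroup.closure_le]
  rintro _ ⟨j, rfl⟩
  induction j using Fin.lastCases with
  | last => exact ht
  | cast i =>
    have : a i ∈ H.comap (fiberHom ε₁ ε₂ ε₃ ε₄ n) := hfiber ▸ Subgroup.mem_top _
    simpa [fiberHom_a] using this

/-- `G'_{ε,n}` is generated by the images of `x₁` and `t`; in particular the fundamental
group of the once-punctured genus-two surface bundle `M'_{ε,n}` has rank at most two. -/
theorem G'_generated_by_two (ε₁ ε₂ ε₃ ε₄ : ℤ)
    (h₁ : ε₁ = 1 ∨ ε₁ = -1) (h₂ : ε₂ = 1 ∨ ε₂ = -1)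
    (h₃ : ε₃ = 1 ∨ ε₃ = -1) (h₄ : ε₄ = 1 ∨ ε₄ = -1) (n : ℤ) :
    Subgroup.closure
      ({PresentedGroup.of (rels := monodromyRels ε₁ ε₂ ε₃ ε₄ n) 0,
        PresentedGroup.of (rels := monodromyRels ε₁ ε₂ ε₃ ε₄ n) 4} :
          Set (G' ε₁ ε₂ ε₃ ε₄ n)) = ⊤ :=
  G'_generated_by_two_general ε₁ ε₂ ε₃ ε₄ h₂ h₃ h₄ n
end

section
/- In the automorphism group Aut(F) of F, for every quadruple ε = (ε₁, ε₂, ε₃, ε₄) with each εᵢ ∈ {+1, −1} and every integer n, the composition Δ₁^{ε₁} ∘ Δ₃^{ε₃} ∘ (Δ₅^{+1})^n ∘ Δ₂^{ε₂} ∘ Δ₄^{ε₄} is conjugate in Aut(F) to Φ_{ε,n} = Δ₂^{ε₂} ∘ Δ₁^{ε₁} ∘ Δ₃^{ε₃} ∘ Δ₄^{ε₄} ∘ (Δ₅^{+1})^n. -/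
lemma Δcomm (i j : Fin 5) (ε δ : ℤ)
    (h : (i, j) ∈ [((0 : Fin 5), (4 : Fin 5)), (2, 4), (1, 4), (1, 3)]) :
    (Δ i ε).comp (Δ j δ) = (Δ j δ).comp (Δ i ε) := by
  fin_cases h <;> · apply FreeGroup.ext_hom; intro k; fin_cases k <;>
      simp [Δ, a, MonoidHom.comp_apply, mul_assoc]

lemma Δaut_commute (i j : Fin 5) (ε δ : ℤ)
    (h : (Δ i ε).comp (Δ j δ) = (Δ j δ).comp (Δ i ε)) :
    Commute (Δaut i ε) (Δaut j δ) := by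
  apply MulEquiv.ext
  intro x
  exact DFunLike.congr_fun h x

lemma conj_key {G : Type*} [Group G] (A B C D E : G) (n : ℤ)
    (hAE : Commute A E) (hCE : Commute C E) (hBE : Commute B E) (hBD : Commute B D) :
    IsConj (A * C * E ^ n * B * D) (B * A * C * D * E ^ n) := by
  rw [isConj_iff]
  refine ⟨B * (E ^ n)⁻¹, ?_⟩
  have hAE' : Commute A (E ^ n) := hAE.zpow_right n
  have hCE' : Commute C (E ^ n) := hCE.zpow_right n
  have hBE' : Commute B (E ^ n) := hBE.zpow_right n
  have lcomm : ∀ {x y : G}, Commute x y → ∀ z : G, x * (y * z) = y * (x * z) := by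
    intro x y h z
    rw [← mul_assoc, h.eq, mul_assoc]
  simp only [mul_inv_rev, inv_inv, mul_assoc]
  rw [lcomm hAE'.symm.inv_left, lcomm hCE'.symm.inv_left, inv_mul_cancel_left,
    hBE'.symm.inv_right.eq, lcomm hBD, mul_inv_cancel_left]

/-- In `Aut(F)`, the composition `Δ₁^{ε₁} ∘ Δ₃^{ε₃} ∘ (Δ₅^{+1})^n ∘ Δ₂^{ε₂} ∘ Δ₄^{ε₄}`
is conjugate to `Φ_{ε,n} = Δ₂^{ε₂} ∘ Δ₁^{ε₁} ∘ Δ₃^{ε₃} ∘ Δ₄^{ε₄} ∘ (Δ₅^{+1})^n`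
(multiplication of automorphisms is composition). -/
theorem aut_conj (ε₁ ε₂ ε₃ ε₄ : ℤ)
    (h₁ : ε₁ = 1 ∨ ε₁ = -1) (h₂ : ε₂ = 1 ∨ ε₂ = -1)
    (h₃ : ε₃ = 1 ∨ ε₃ = -1) (h₄ : ε₄ = 1 ∨ ε₄ = -1) (n : ℤ) :
    IsConj (Δaut 0 ε₁ * Δaut 2 ε₃ * (Δaut 4 1) ^ n * Δaut 1 ε₂ * Δaut 3 ε₄)
      (Φ ε₁ ε₂ ε₃ ε₄ n) := by
  have hAE := Δaut_commute 0 4 ε₁ 1 (Δcomm 0 4 ε₁ 1 (by simp))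
  have hCE := Δaut_commute 2 4 ε₃ 1 (Δcomm 2 4 ε₃ 1 (by simp))
  have hBE := Δaut_commute 1 4 ε₂ 1 (Δcomm 1 4 ε₂ 1 (by simp))
  have hBD := Δaut_commute 1 3 ε₂ ε₄ (Δcomm 1 3 ε₂ ε₄ (by simp))
  have := conj_key (Δaut 0 ε₁) (Δaut 1 ε₂) (Δaut 2 ε₃) (Δaut 3 ε₄) (Δaut 4 1) n
    hAE hCE hBE hBD
  simpa [Φ, mul_assoc] using this
end
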